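/- arXiv:1504.05144 — 5 statements merged into one kernel-verified Lean document; each statement's English description precedes it below -/
import Mathlib

section
/- Let f(X) = X^n + a_1 X^{n-1} + ... + a_n be a monic polynomial with complex coefficients of degree n ≥ 2, and let R be the maximal modulus among its roots. If f has at least two roots (counted with multiplicity) of modulus R, then |a_1| ≤ n·(n+1)^{1/4}·H(f)^{1/2}, where H(f) = max_{1≤j≤n} max{1, |a_j|} is the height of f. -/
/-!
Two roots of modulus `R` already contribute `R²` to the Mahler measure `M(f) = ∏ max 1 ‖αᵢ‖`,
and Landau's inequality gives `M(f) ≤ √(n + 1) · H(f)`; hence `R ≤ (n + 1)^(1/4) · H(f)^(1/2)`,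
while Vieta gives `‖a₁‖ = ‖∑ αᵢ‖ ≤ n R`.
-/

open Polynomial Finset

namespace Polynomial

lemma supNorm_le_sup'_max_one_norm_coeff {A : Type*} [SeminormedRing A] {p : A[X]} {n : ℕ}
    (hp : p.natDegree ≤ n) :
    p.supNorm ≤ (range (n + 1)).sup' nonempty_range_add_one fun j => max 1 ‖p.coeff j‖ := by
  obtain ⟨i, hi⟩ := p.exists_eq_supNorm
  rw [hi]
  by_cases hin : i ≤ n
  · exact (le_max_right _ _).trans (le_sup' (fun j => max 1 ‖p.coeff j‖) (mem_range.2 (by omega)))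
  · rw [coeff_eq_zero_of_natDegree_lt (by omega), norm_zero]
    exact zero_le_one.trans <| (le_max_left _ _).trans
      (le_sup' (fun j => max 1 ‖p.coeff j‖) (mem_range.2 n.lt_succ_self))

lemma mahlerMeasure_prod_X_sub_C {ι : Type*} (s : Finset ι) (α : ι → ℂ) :
    (∏ i ∈ s, (X - C (α i))).mahlerMeasure = ∏ i ∈ s, max 1 ‖α i‖ := by
  classical
  induction s using Finset.induction_on with
  | empty => simp
  | insert i s hi ih => rw [prod_insert hi, prod_insert hi, mahlerMeasure_mul, ih,
      mahlerMeasure_X_sub_C]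

lemma norm_mul_norm_le_mahlerMeasure_prod_X_sub_C {ι : Type*} [Fintype ι] (α : ι → ℂ) {i j : ι}
    (hij : i ≠ j) : ‖α i‖ * ‖α j‖ ≤ (∏ k, (X - C (α k))).mahlerMeasure := by
  classical
  rw [mahlerMeasure_prod_X_sub_C]
  calc ‖α i‖ * ‖α j‖ ≤ max 1 ‖α i‖ * max 1 ‖α j‖ := by gcongr <;> exact le_max_right _ _
    _ = ∏ k ∈ {i, j}, max 1 ‖α k‖ := (prod_pair (f := fun k => max 1 ‖α k‖) hij).symm
    _ ≤ ∏ k, max 1 ‖α k‖ :=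
      prod_le_prod_of_subset_of_one_le (subset_univ _) (fun _ _ => by positivity)
        fun _ _ _ => le_max_left _ _

lemma norm_coeff_card_pred_prod_X_sub_C_le {ι : Type*} [Fintype ι] [Nonempty ι] (α : ι → ℂ) :
    ‖(∏ i, (X - C (α i))).coeff (Fintype.card ι - 1)‖ ≤ ∑ i, ‖α i‖ := by
  rw [← card_univ, prod_X_sub_C_coeff_card_pred _ _ univ_nonempty.card_pos, norm_neg]
  exact norm_sum_le _ _

end Polynomial

/-- If a monic f ∈ ℂ[X] of degree n ≥ 2 has at least two roots (with multiplicity) of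
maximal modulus R, then |a₁| ≤ n·(n+1)^(1/4)·H(f)^(1/2), where
H(f) = max_{1≤j≤n} max{1,|aⱼ|} and a₁ is the coefficient of X^(n-1). -/
theorem two_max_roots_coeff_bound (n : ℕ) (hn : 2 ≤ n) (α : Fin n → ℂ)
    (f : Polynomial ℂ) (hf : f = ∏ i, (Polynomial.X - Polynomial.C (α i)))
    (hmax : ∀ i, ‖α i‖ ≤ ‖α ⟨0, by omega⟩‖)
    (htwo : ‖α ⟨1, by omega⟩‖ = ‖α ⟨0, by omega⟩‖) :
    ‖f.coeff (n - 1)‖ ≤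
      (n : ℝ) * ((n : ℝ) + 1) ^ ((1 : ℝ) / 4) *
        (((Finset.range (n + 1)).sup' (Finset.nonempty_range_iff.2 (Nat.succ_ne_zero n))
          fun j => max 1 ‖f.coeff j‖) ^ ((1 : ℝ) / 2)) := by
  set R := ‖α ⟨0, by omega⟩‖
  set H := (range (n + 1)).sup' (nonempty_range_iff.2 (Nat.succ_ne_zero n))
    fun j => max 1 ‖f.coeff j‖
  have hdeg : f.natDegree = n := by simp [hf, natDegree_finsetProd_X_sub_C_eq_card]
  have hH : 0 ≤ H := zero_le_one.trans <|
    (le_max_left _ _).trans (le_sup' (fun j => max 1 ‖f.coeff j‖) (mem_range.2 n.succ_pos))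
  have hR_sq : R ^ 2 ≤ √(n + 1) * H :=
    calc R ^ 2 = ‖α ⟨1, by omega⟩‖ * R := by rw [htwo, sq]
      _ ≤ f.mahlerMeasure := hf ▸ norm_mul_norm_le_mahlerMeasure_prod_X_sub_C α (by simp)
      _ ≤ √(f.natDegree + 1) * f.supNorm := f.mahlerMeasure_le_sqrt_natDegree_add_one_mul_supNorm
      _ ≤ √(n + 1) * H := by
        rw [hdeg]; gcongr; exact supNorm_le_sup'_max_one_norm_coeff hdeg.le
  have hR : R ≤ ((n : ℝ) + 1) ^ ((1 : ℝ) / 4) * H ^ ((1 : ℝ) / 2) := by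
    rw [← Real.le_sqrt (norm_nonneg _) (by positivity), Real.sqrt_mul (by positivity),
      Real.sqrt_eq_rpow, Real.sqrt_eq_rpow, Real.sqrt_eq_rpow,
      ← Real.rpow_mul (by positivity)] at hR_sq
    convert hR_sq using 3
    norm_num
  have : Nonempty (Fin n) := ⟨⟨0, by omega⟩⟩
  calc ‖f.coeff (n - 1)‖ ≤ ∑ i, ‖α i‖ := by
        simpa [hf] using norm_coeff_card_pred_prod_X_sub_C_le α
    _ ≤ ∑ _i : Fin n, R := sum_le_sum fun i _ => hmax i
    _ = n * R := by simp
    _ ≤ _ := by rw [mul_assoc]; gcongr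
end

section
/- Let f(X) = a_0 ∏_{i=1}^m (X - α_i)^{e_i} be a polynomial of degree n ≥ 1 over ℂ with distinct roots α_1,...,α_m. Let 0 < γ < (1/2)·min_{i≠j}|α_i - α_j| (γ arbitrary positive if m = 1), let M = max_{1≤j≤m} ∑_{i=0}^n (γ + |α_j|)^i, let δ = min_{1≤j≤m} ( |a_0| γ^{e_j} ∏_{i≠j} (|α_i - α_j| - γ)^{e_i} ), and set ε = δ/M. Then for any polynomial g(X) = (a_0 + ε_0)X^n + (a_1 + ε_1)X^{n-1} + ... + (a_n + ε_n) with |ε_i| < ε for all 0 ≤ i ≤ n, the polynomial g has exactly e_j zeros (counted with multiplicity) in the open disk of center α_j and radius γ, for each 1 ≤ j ≤ m. -/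
/-!
On the circle `‖z - α j‖ = γ` every factor satisfies `‖z - α i‖ ≥ ‖α i - α j‖ - γ`, so
`‖f z‖ ≥ δ`, while `‖g z - f z‖ = ‖∑ E i z ^ i‖ < ε M = δ`. By Rouché's theorem `g` has as many
zeros in the disc as `f`, namely `e j`. For polynomials Rouché's theorem reduces to the argument
principle `∮ p'/p = 2πi · #{zeros inside}`, which follows from the partial fractions
`p'/p = ∑ 1/(z - r)`: on the circle `g/f` stays in the disc `‖w - 1‖ < 1`, where the principal
logarithm is holomorphic, so `log (g/f)` is a primitive of `g'/g - f'/f` and its integral vanishes.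
-/

open Polynomial Metric Complex Real Finset

section

variable {c : ℂ} {R : ℝ}

theorem circleIntegral_sub_inv_of_lt_norm {r : ℂ} (hR : 0 ≤ R) (hr : R < ‖r - c‖) :
    (∮ z in C(c, R), (z - r)⁻¹) = 0 := by
  have hr' : r ∉ closedBall c R := by rwa [mem_closedBall_iff_norm, not_le]
  refine (DifferentiableOn.diffContOnCl_ball ?_ subset_rfl).circleIntegral_eq_zero hR
  exact (differentiableOn_id.sub_const r).inv fun _ hz =>
    sub_ne_zero.2 (ne_of_mem_of_not_mem hz hr')

theorem circleIntegral_multiset_sum_sub_inv (hR : 0 < R) (s : Multiset ℂ)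
    (hs : ∀ r ∈ s, ‖r - c‖ ≠ R) :
    (∮ z in C(c, R), (s.map fun r => (z - r)⁻¹).sum) =
      2 * π * I * (s.filter fun r => ‖r - c‖ < R).card := by
  induction s using Multiset.induction_on with
  | empty => simp [circleIntegral]
  | cons r s ih =>
    have hr := hs r (Multiset.mem_cons_self r s)
    have hs' : ∀ r ∈ s, ‖r - c‖ ≠ R := fun r' hr' => hs r' (Multiset.mem_cons_of_mem hr')
    have hsum : CircleIntegrable (fun z => (s.map fun r => (z - r)⁻¹).sum) c R := by
      refine ContinuousOn.circleIntegrable hR.le (continuousOn_multiset_sum _ fun r' hr' => ?_)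
      refine (continuousOn_id.sub continuousOn_const).inv₀ fun z hz h => hs' r' hr' ?_
      rw [← mem_sphere_iff_norm.1 hz, show z = r' from sub_eq_zero.1 h]
    simp only [Multiset.map_cons, Multiset.sum_cons]
    rw [circleIntegral.integral_add (by simp [abs_of_pos hR, hr]) hsum, ih hs',
      Multiset.filter_cons]
    rcases hr.lt_or_gt with hrb | hrb
    · rw [circleIntegral.integral_sub_inv_of_mem_ball (mem_ball_iff_norm.2 hrb)]
      simp [hrb]; ring
    · simp [hrb.not_gt, circleIntegral_sub_inv_of_lt_norm hR.le hrb]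

end

namespace Polynomial

variable {p q : ℂ[X]} {c : ℂ} {R : ℝ}

theorem circleIntegrable_derivative_div (hR : 0 ≤ R) (hp : ∀ z ∈ sphere c R, p.eval z ≠ 0) :
    CircleIntegrable (fun z => p.derivative.eval z / p.eval z) c R :=
  (p.derivative.continuous.continuousOn.div p.continuous.continuousOn hp).circleIntegrable hR

/-- The argument principle for polynomials. -/
theorem circleIntegral_derivative_div (hR : 0 < R) (hp : ∀ z ∈ sphere c R, p.eval z ≠ 0) :
    (∮ z in C(c, R), p.derivative.eval z / p.eval z) =
      2 * π * I * (p.roots.filter fun r => ‖r - c‖ < R).card := by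
  have hroots : ∀ r ∈ p.roots, ‖r - c‖ ≠ R := fun r hr hrc =>
    hp r (mem_sphere_iff_norm.2 hrc) (isRoot_of_mem_roots hr)
  rw [← circleIntegral_multiset_sum_sub_inv hR _ hroots]
  refine circleIntegral.integral_congr hR.le fun z hz => ?_
  simp only [(IsAlgClosed.splits p).eval_derivative_div_eval_of_ne_zero (hp z hz), one_div]

theorem circleIntegral_derivative_div_sub_eq_zero (hR : 0 ≤ R)
    (h : ∀ z ∈ sphere c R, ‖q.eval z - p.eval z‖ < ‖p.eval z‖) :
    (∮ z in C(c, R), (q.derivative.eval z / q.eval z - p.derivative.eval z / p.eval z)) = 0 := by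
  refine circleIntegral.integral_eq_zero_of_hasDerivWithinAt
    (f := fun z => log (q.eval z / p.eval z)) hR fun z hz => ?_
  have hp : p.eval z ≠ 0 := norm_pos_iff.1 ((norm_nonneg _).trans_lt (h z hz))
  have hq : q.eval z ≠ 0 := fun h0 => (h z hz).ne (by rw [h0, zero_sub, norm_neg])
  have hslit : q.eval z / p.eval z ∈ slitPlane := ball_one_subset_slitPlane <| by
    rw [mem_ball_iff_norm, div_sub_one hp, norm_div, div_lt_one (norm_pos_iff.2 hp)]
    exact h z hz
  have hdiv : HasDerivAt (fun w => q.eval w / p.eval w) _ z :=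
    (q.hasDerivAt z).div (p.hasDerivAt z) hp
  convert (hdiv.clog hslit).hasDerivWithinAt using 1
  field_simp

/-- Rouché's theorem for polynomials. -/
theorem card_filter_roots_eq_of_norm_eval_sub_lt (hR : 0 < R)
    (h : ∀ z ∈ sphere c R, ‖q.eval z - p.eval z‖ < ‖p.eval z‖) :
    (q.roots.filter fun r => ‖r - c‖ < R).card = (p.roots.filter fun r => ‖r - c‖ < R).card := by
  have hp : ∀ z ∈ sphere c R, p.eval z ≠ 0 := fun z hz =>
    norm_pos_iff.1 ((norm_nonneg _).trans_lt (h z hz))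
  have hq : ∀ z ∈ sphere c R, q.eval z ≠ 0 := fun z hz h0 =>
    (h z hz).ne (by rw [h0, zero_sub, norm_neg])
  have := circleIntegral_derivative_div_sub_eq_zero hR.le h
  rw [circleIntegral.integral_sub (circleIntegrable_derivative_div hR.le hq)
    (circleIntegrable_derivative_div hR.le hp), sub_eq_zero, circleIntegral_derivative_div hR hq,
    circleIntegral_derivative_div hR hp] at this
  exact_mod_cast mul_left_cancel₀ (by simp [pi_ne_zero]) this

section

variable {K ι : Type*} [Field K] (s : Finset ι) (a : K) (α : ι → K) (e : ι → ℕ)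

theorem natDegree_C_mul_prod_X_sub_C_pow_le :
    (C a * ∏ i ∈ s, (X - C (α i)) ^ e i).natDegree ≤ ∑ i ∈ s, e i := by
  refine (natDegree_C_mul_le _ _).trans ((natDegree_prod_le _ _).trans (sum_le_sum fun i _ => ?_))
  exact (natDegree_pow_le_of_le (e i) (natDegree_X_sub_C_le (α i))).trans_eq (mul_one _)

theorem card_filter_roots_C_mul_prod_X_sub_C_pow (ha : a ≠ 0) (P : K → Prop) [DecidablePred P] :
    ((C a * ∏ i ∈ s, (X - C (α i)) ^ e i).roots.filter P).card = ∑ i ∈ s with P (α i), e i := by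
  rw [roots_C_mul _ ha,
    roots_prod _ _ (prod_ne_zero_iff.2 fun i _ => pow_ne_zero _ (X_sub_C_ne_zero _)),
    Multiset.filter_bind, Multiset.card_bind, sum_filter]
  refine sum_congr rfl fun i _ => ?_
  rw [Function.comp_apply, roots_pow, roots_X_sub_C, Multiset.filter_nsmul, Multiset.card_nsmul,
    Multiset.filter_singleton]
  split_ifs <;> simp

end

theorem eval_sum_range_C_coeff_add_mul_X_pow_sub {R : Type*} [CommRing R] {f : R[X]} {n : ℕ}
    (hf : f.natDegree ≤ n) (E : ℕ → R) (z : R) :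
    (∑ i ∈ range (n + 1), C (f.coeff i + E i) * X ^ i).eval z - f.eval z =
      ∑ i ∈ range (n + 1), E i * z ^ i := by
  rw [eval_eq_sum_range' (Nat.lt_succ_of_le hf), eval_finsetSum, ← sum_sub_distrib]
  simp [add_mul]

theorem le_norm_eval_C_mul_prod_X_sub_C_pow {𝕜 ι : Type*} [NormedField 𝕜] [DecidableEq ι]
    {s : Finset ι} {j : ι} (hj : j ∈ s) (a : 𝕜) (α : ι → 𝕜) (e : ι → ℕ) {z : 𝕜}
    (hz : ∀ i ∈ s.erase j, ‖z - α j‖ ≤ ‖α i - α j‖) :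
    ‖a‖ * ‖z - α j‖ ^ e j * ∏ i ∈ s.erase j, (‖α i - α j‖ - ‖z - α j‖) ^ e i ≤
      ‖(C a * ∏ i ∈ s, (X - C (α i)) ^ e i).eval z‖ := by
  simp only [eval_mul, eval_C, eval_prod, eval_pow, eval_sub, eval_X, norm_mul, norm_prod,
    norm_pow, ← mul_prod_erase s _ hj, mul_assoc]
  refine mul_le_mul_of_nonneg_left (mul_le_mul_of_nonneg_left ?_ (by positivity)) (norm_nonneg a)
  refine prod_le_prod (fun i hi => pow_nonneg (sub_nonneg.2 (hz i hi)) _) fun i hi => ?_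
  refine pow_le_pow_left₀ (sub_nonneg.2 (hz i hi)) ?_ _
  linarith [norm_sub_le_norm_sub_add_norm_sub (α i) z (α j), norm_sub_rev (α i) z]

end Polynomial

theorem norm_sum_range_mul_pow_lt {𝕜 : Type*} [NormedField 𝕜] {n : ℕ} {E : ℕ → 𝕜} {ε A : ℝ}
    (hE : ∀ i ≤ n, ‖E i‖ < ε) {z : 𝕜} (hz : ‖z‖ ≤ A) :
    ‖∑ i ∈ range (n + 1), E i * z ^ i‖ < ε * ∑ i ∈ range (n + 1), A ^ i := by
  have hE' : ∀ i ∈ range (n + 1), ‖E i‖ < ε := fun i hi =>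
    hE i (Nat.lt_succ_iff.1 (mem_range.1 hi))
  rw [mul_sum]
  refine (norm_sum_le _ _).trans_lt
    (sum_lt_sum (fun i hi => ?_) ⟨0, by simp, by simpa using hE' 0 (by simp)⟩)
  rw [norm_mul, norm_pow]
  exact mul_le_mul (hE' i hi).le (pow_le_pow_left₀ (norm_nonneg z) hz i) (by positivity)
    ((norm_nonneg _).trans (hE' i hi).le)

theorem roots_continuity_general (n m : ℕ) (hm : 0 < m)
    (a0 : ℂ) (ha0 : a0 ≠ 0) (α : Fin m → ℂ)
    (e : Fin m → ℕ) (he : ∑ i, e i = n)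
    (f : Polynomial ℂ)
    (hf : f = Polynomial.C a0 * ∏ i, (Polynomial.X - Polynomial.C (α i)) ^ e i)
    (γ : ℝ) (hγ : 0 < γ)
    (hγ2 : ∀ i j, i ≠ j → 2 * γ < ‖α i - α j‖)
    (M δ ε : ℝ)
    (hM : M = Finset.univ.sup' (Finset.univ_nonempty_iff.mpr ⟨⟨0, hm⟩⟩)
      (fun j => ∑ i ∈ Finset.range (n + 1), (γ + ‖α j‖) ^ i))
    (hδ : δ = Finset.univ.inf' (Finset.univ_nonempty_iff.mpr ⟨⟨0, hm⟩⟩)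
      (fun j => ‖a0‖ * γ ^ e j *
        ∏ i ∈ Finset.univ.erase j, (‖α i - α j‖ - γ) ^ e i))
    (hε : ε = δ / M)
    (E : ℕ → ℂ) (hE : ∀ i ≤ n, ‖E i‖ < ε)
    (g : Polynomial ℂ)
    (hg : g = ∑ i ∈ Finset.range (n + 1), Polynomial.C (f.coeff i + E i) * Polynomial.X ^ i) :
    ∀ j : Fin m, (g.roots.filter fun z => ‖z - α j‖ < γ).card = e j := by
  intro j
  have hfn : f.natDegree ≤ n := hf ▸ he ▸ natDegree_C_mul_prod_X_sub_C_pow_le _ _ _ _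
  have hM_pos : 0 < M := hM ▸ (lt_sup'_iff _).2
    ⟨j, mem_univ j, sum_pos (fun i _ => by positivity) nonempty_range_add_one⟩
  have hε_nonneg : 0 ≤ ε := (norm_nonneg _).trans (hE 0 n.zero_le).le
  have hsphere : ∀ z ∈ sphere (α j) γ, ‖g.eval z - f.eval z‖ < ‖f.eval z‖ := by
    intro z hz
    rw [mem_sphere_iff_norm] at hz
    have hfar : ∀ i ∈ univ.erase j, ‖z - α j‖ ≤ ‖α i - α j‖ := fun i hi => by
      linarith [hγ2 i j (ne_of_mem_erase hi)]
    calc ‖g.eval z - f.eval z‖ = ‖∑ i ∈ range (n + 1), E i * z ^ i‖ := by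
          rw [hg, eval_sum_range_C_coeff_add_mul_X_pow_sub hfn]
      _ < ε * ∑ i ∈ range (n + 1), (γ + ‖α j‖) ^ i :=
          norm_sum_range_mul_pow_lt hE (hz ▸ norm_le_norm_sub_add z (α j))
      _ ≤ ε * M := mul_le_mul_of_nonneg_left (hM ▸ le_sup' (fun j => ∑ i ∈ range (n + 1),
          (γ + ‖α j‖) ^ i) (mem_univ j)) hε_nonneg
      _ = δ := by rw [hε, div_mul_cancel₀ _ hM_pos.ne']
      _ ≤ ‖a0‖ * γ ^ e j * ∏ i ∈ univ.erase j, (‖α i - α j‖ - γ) ^ e i :=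
          hδ ▸ inf'_le _ (mem_univ j)
      _ ≤ ‖f.eval z‖ := hz ▸ hf ▸ le_norm_eval_C_mul_prod_X_sub_C_pow (mem_univ j) a0 α e hfar
  rw [card_filter_roots_eq_of_norm_eval_sub_lt hγ hsphere, hf,
    card_filter_roots_C_mul_prod_X_sub_C_pow _ _ _ _ ha0]
  exact sum_eq_single_of_mem j (by simp [hγ]) fun i hi hij =>
    absurd (mem_filter.1 hi).2 (by linarith [hγ2 i j hij])

/-- Quantitative continuity of roots (Rouché-type perturbation):
if f = a₀ ∏ (X - αᵢ)^{eᵢ} with distinct roots αᵢ, and g is obtained from f by perturbing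
each of the coefficients of X^0, ..., X^n by less than ε = δ/M, then g has exactly eⱼ zeros
(with multiplicity) in the open disk of center αⱼ and radius γ. -/
theorem roots_continuity (n m : ℕ) (hn : 1 ≤ n) (hm : 0 < m)
    (a0 : ℂ) (ha0 : a0 ≠ 0) (α : Fin m → ℂ) (hα : Function.Injective α)
    (e : Fin m → ℕ) (he : ∑ i, e i = n)
    (f : Polynomial ℂ)
    (hf : f = Polynomial.C a0 * ∏ i, (Polynomial.X - Polynomial.C (α i)) ^ e i)
    (γ : ℝ) (hγ : 0 < γ)
    (hγ2 : ∀ i j, i ≠ j → 2 * γ < ‖α i - α j‖)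
    (M δ ε : ℝ)
    (hM : M = Finset.univ.sup' (Finset.univ_nonempty_iff.mpr ⟨⟨0, hm⟩⟩)
      (fun j => ∑ i ∈ Finset.range (n + 1), (γ + ‖α j‖) ^ i))
    (hδ : δ = Finset.univ.inf' (Finset.univ_nonempty_iff.mpr ⟨⟨0, hm⟩⟩)
      (fun j => ‖a0‖ * γ ^ e j *
        ∏ i ∈ Finset.univ.erase j, (‖α i - α j‖ - γ) ^ e i))
    (hε : ε = δ / M)
    (E : ℕ → ℂ) (hE : ∀ i ≤ n, ‖E i‖ < ε)
    (g : Polynomial ℂ)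
    (hg : g = ∑ i ∈ Finset.range (n + 1), Polynomial.C (f.coeff i + E i) * Polynomial.X ^ i) :
    ∀ j : Fin m, (g.roots.filter fun z => ‖z - α j‖ < γ).card = e j :=
  roots_continuity_general n m hm a0 ha0 α e he f hf γ hγ hγ2 M δ ε hM hδ hε E hE g hg
end

section
/- Let n ≥ 4 and let f ∈ ℚ[X] be an irreducible polynomial of degree n whose Galois group (of its splitting field over ℚ) is the full symmetric group S_n. Then f cannot have four distinct roots α_1, α_2, α_3, α_4 in ℂ with α_1 α_2 = α_3 α_4. -/
/-!
The Galois action on the roots of `f` in `ℂ` comes from field automorphisms of the splitting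
field, so it preserves every polynomial relation among the roots; when that action is all of
`Sₙ`, every permutation of the roots does. Swapping `α₁ ↔ α₃` and `α₁ ↔ α₄` in
`α₁α₂ = α₃α₄` gives `α₃α₂ = α₁α₄` and `α₄α₂ = α₃α₁`; subtracting these from the original
relation factors as `(α₁ - α₃)(α₂ + α₄) = 0` and `(α₁ - α₄)(α₂ + α₃) = 0`, so
`α₃ = -α₂ = α₄`.
-/

open scoped Polynomial
open MvPolynomial Equiv

theorem eq_of_mul_eq_mul_of_swaps {R : Type*} [CommRing R] [IsDomain R] {a b c d : R}
    (hac : a ≠ c) (had : a ≠ d) (h : a * b = c * d) (hswap_c : c * b = a * d)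
    (hswap_d : d * b = c * a) : c = d := by
  have hsum_d : b + d = 0 :=
    (mul_eq_zero.mp (by linear_combination h - hswap_c : (a - c) * (b + d) = 0)).resolve_left
      (sub_ne_zero.mpr hac)
  have hsum_c : b + c = 0 :=
    (mul_eq_zero.mp (by linear_combination h - hswap_d : (a - d) * (b + c) = 0)).resolve_left
      (sub_ne_zero.mpr had)
  linear_combination hsum_c - hsum_d

namespace Polynomial.Gal

variable {F E : Type*} [Field F] [Field E] [Algebra F E] {p : F[X]}
  [Fact (p.map (algebraMap F E)).Splits]

theorem algHom_rootsEquivRoots_symm (x : p.rootSet E) :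
    IsScalarTower.toAlgHom F p.SplittingField E ((rootsEquivRoots p E).symm x) = x :=
  congrArg Subtype.val ((rootsEquivRoots p E).apply_symm_apply x)

theorem aeval_smul_rootSet_eq_zero {ι : Type*} {q : MvPolynomial ι F} {x : ι → p.rootSet E}
    (h : MvPolynomial.aeval (fun i ↦ (x i : E)) q = 0) (ϕ : p.Gal) :
    MvPolynomial.aeval (fun i ↦ ((ϕ • x i : p.rootSet E) : E)) q = 0 := by
  set j := IsScalarTower.toAlgHom F p.SplittingField E
  set y := fun i ↦ ((rootsEquivRoots p E).symm (x i) : p.SplittingField)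
  have hy : MvPolynomial.aeval y q = 0 := (map_eq_zero_iff j j.injective).mp <| by
    rw [comp_aeval_apply, ← h]
    simp only [y, j, algHom_rootsEquivRoots_symm]
  have hϕ : (fun i ↦ ((ϕ • x i : p.rootSet E) : E)) = fun i ↦ (j.comp ϕ.toAlgHom) (y i) := rfl
  rw [hϕ, ← comp_aeval_apply, hy, map_zero]

theorem aeval_perm_rootSet_eq_zero_of_galActionHom_surjective
    (hsurj : Function.Surjective (galActionHom p E)) {ι : Type*} {q : MvPolynomial ι F}
    {x : ι → p.rootSet E} (h : MvPolynomial.aeval (fun i ↦ (x i : E)) q = 0)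
    (σ : Perm (p.rootSet E)) :
    MvPolynomial.aeval (fun i ↦ (σ (x i) : E)) q = 0 := by
  obtain ⟨ϕ, rfl⟩ := hsurj σ
  exact aeval_smul_rootSet_eq_zero h ϕ

end Polynomial.Gal

theorem sn_galois_no_multiplicative_relation_general (f : Polynomial ℚ)
    (hgal : Function.Surjective
      (@Polynomial.Gal.galActionHom ℚ _ f ℂ _ _ Polynomial.Gal.splits_ℚ_ℂ)) :
    ¬ ∃ a b c d : ℂ, a ∈ f.rootSet ℂ ∧ b ∈ f.rootSet ℂ ∧ c ∈ f.rootSet ℂ ∧ d ∈ f.rootSet ℂ ∧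
      a ≠ b ∧ a ≠ c ∧ a ≠ d ∧ b ≠ c ∧ b ≠ d ∧ c ≠ d ∧ a * b = c * d := by
  rintro ⟨a, b, c, d, ha, hb, hc, hd, hab, hac, had, hbc, hbd, hcd, hrel⟩
  have := Polynomial.Gal.splits_ℚ_ℂ (p := f)
  have hperm (σ : Perm (f.rootSet ℂ)) :
      (σ ⟨a, ha⟩ : ℂ) * σ ⟨b, hb⟩ = σ ⟨c, hc⟩ * σ ⟨d, hd⟩ := by
    have h := Polynomial.Gal.aeval_perm_rootSet_eq_zero_of_galActionHom_surjective hgal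
      (q := X ⟨a, ha⟩ * X ⟨b, hb⟩ - X ⟨c, hc⟩ * X ⟨d, hd⟩) (x := id)
      (by simpa [sub_eq_zero] using hrel) σ
    simpa [sub_eq_zero] using h
  have hswap_c := hperm (swap ⟨a, ha⟩ ⟨c, hc⟩)
  have hswap_d := hperm (swap ⟨a, ha⟩ ⟨d, hd⟩)
  simp only [swap_apply_left, swap_apply_right, swap_apply_of_ne_of_ne, ne_eq, Subtype.mk.injEq,
    not_false_eq_true, hab.symm, hac.symm, had.symm, hbc, hbd, hcd, hcd.symm] at hswap_c hswap_d
  exact hcd (eq_of_mul_eq_mul_of_swaps hac had hrel hswap_c hswap_d)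

/-- If f ∈ ℚ[X] is irreducible of degree n ≥ 4 with Galois group the full symmetric group
Sₙ (i.e. the Galois action on the complex roots is all of the permutation group), then f
cannot have four distinct roots α₁, α₂, α₃, α₄ with α₁α₂ = α₃α₄. -/
theorem sn_galois_no_multiplicative_relation (n : ℕ) (hn : 4 ≤ n) (f : Polynomial ℚ)
    (hirr : Irreducible f) (hdeg : f.natDegree = n)
    (hgal : Function.Surjective
      (@Polynomial.Gal.galActionHom ℚ _ f ℂ _ _ Polynomial.Gal.splits_ℚ_ℂ)) :
    ¬ ∃ a b c d : ℂ, a ∈ f.rootSet ℂ ∧ b ∈ f.rootSet ℂ ∧ c ∈ f.rootSet ℂ ∧ d ∈ f.rootSet ℂ ∧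
      a ≠ b ∧ a ≠ c ∧ a ≠ d ∧ b ≠ c ∧ b ≠ d ∧ c ≠ d ∧ a * b = c * d :=
  sn_galois_no_multiplicative_relation_general f hgal
end

section
/- Let n ≥ 4 be even, and let f(X) = X^n + a_1 X^{n-1} + ... + a_n be a real polynomial with a_1 < 0 and a_i > 0 for 2 ≤ i ≤ n, such that a_1^2 < a_2, a_{2k} ≥ a_{2k+1} for 1 ≤ k ≤ (n-2)/2, and min_{1≤i≤n/2} a_{2i} ≥ max_{1≤i≤(n-2)/2} a_{2i+1}. Then f has no real roots at all. -/
open Finset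

private lemma pair_sum_aux (b : ℕ → ℝ) (m : ℕ) :
    ∑ j ∈ range (2 * m), b j = ∑ k ∈ range m, (b (2 * k) + b (2 * k + 1)) := by
  induction m with
  | zero => simp
  | succ m ih =>
    have e : 2 * (m + 1) = 2 * m + 1 + 1 := by ring
    rw [e, sum_range_succ, sum_range_succ, ih, sum_range_succ]; ring

/-- Let n ≥ 4 be even and f(X) = Xⁿ + a₁Xⁿ⁻¹ + ⋯ + aₙ with a₁ < 0, aᵢ > 0 for 2 ≤ i ≤ n,
a₁² < a₂, a_{2k} ≥ a_{2k+1} for 1 ≤ k ≤ (n-2)/2, and min_{1≤i≤n/2} a_{2i} ≥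
max_{1≤i≤(n-2)/2} a_{2i+1}. Then f has no real roots. -/
theorem no_real_roots_even (n : ℕ) (hn : 4 ≤ n) (hev : Even n) (a : ℕ → ℝ)
    (h1 : a 1 < 0) (hpos : ∀ i, 2 ≤ i → i ≤ n → 0 < a i)
    (h12 : (a 1) ^ 2 < a 2)
    (hpair : ∀ k, 1 ≤ k → 2 * k + 1 ≤ n - 1 → a (2 * k + 1) ≤ a (2 * k))
    (hminmax : ∀ i j, 1 ≤ i → 2 * i ≤ n → 1 ≤ j → 2 * j + 1 ≤ n - 1 →
      a (2 * j + 1) ≤ a (2 * i)) :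
    ∀ x : ℝ, x ^ n + ∑ i ∈ Finset.Icc 1 n, a i * x ^ (n - i) ≠ 0 := by
  obtain ⟨p, hp⟩ : ∃ p, n = 2 * p + 4 := by
    obtain ⟨m, hm⟩ := hev; exact ⟨(n - 4) / 2, by omega⟩
  subst hp
  intro x hx
  apply absurd hx
  apply ne_of_gt
  -- rewrite the sum as a range sum
  have hsum : ∑ i ∈ Finset.Icc 1 (2 * p + 4), a i * x ^ (2 * p + 4 - i)
      = ∑ j ∈ range (2 * p + 4), a (1 + j) * x ^ (2 * p + 3 - j) := by
    rw [← Finset.Ico_add_one_right_eq_Icc, Finset.sum_Ico_eq_sum_range]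
    have e0 : 2 * p + 4 + 1 - 1 = 2 * p + 4 := by omega
    rw [e0]
    refine Finset.sum_congr rfl fun j hj => ?_
    rw [show 2 * p + 4 - (1 + j) = 2 * p + 3 - j from by omega]
  rw [hsum]
  have hx2 : ∀ q : ℕ, 0 ≤ x ^ (2 * q) := fun q => by
    rw [show 2 * q = q * 2 by ring, pow_mul]; positivity
  rcases le_or_gt 0 x with hx0 | hx0
  · -- case x ≥ 0
    have e : 2 * p + 4 = 2 * p + 2 + 1 + 1 := by ring
    rw [e, sum_range_succ', sum_range_succ']
    have e2 : 2 * p + 2 = 2 * (p + 1) := by ring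
    rw [e2, pair_sum_aux]
    have hquad : 0 < x ^ 2 + a 1 * x + a 2 := by
      nlinarith [sq_nonneg (2 * x + a 1), sq_nonneg (a 1)]
    have hT : 0 < ∑ k ∈ range (p + 1),
        (a (1 + (2 * k + 1 + 1)) * x ^ (2 * p + 3 - (2 * k + 1 + 1)) +
         a (1 + (2 * k + 1 + 1 + 1)) * x ^ (2 * p + 3 - (2 * k + 1 + 1 + 1))) := by
      apply Finset.sum_pos'
      · intro k hk
        simp only [mem_range] at hk
        have h3 : 0 < a (1 + (2 * k + 1 + 1)) := hpos _ (by omega) (by omega)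
        have h4 : 0 < a (1 + (2 * k + 1 + 1 + 1)) := hpos _ (by omega) (by omega)
        positivity
      · refine ⟨p, by simp, ?_⟩
        have e3 : 2 * p + 3 - (2 * p + 1 + 1) = 1 := by omega
        have e4 : 2 * p + 3 - (2 * p + 1 + 1 + 1) = 0 := by omega
        rw [e3, e4, pow_zero, pow_one]
        have h3 : 0 < a (1 + (2 * p + 1 + 1)) := hpos _ (by omega) (by omega)
        have h4 : 0 < a (1 + (2 * p + 1 + 1 + 1)) := hpos _ (by omega) (by omega)
        nlinarith
    have hhead : 0 ≤ x ^ (2 * (p + 1) + 1 + 1) + (a (1 + (0 + 1)) * x ^ (2 * p + 3 - (0 + 1)) +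
        a (1 + 0) * x ^ (2 * p + 3 - 0)) := by
      rw [show (1 : ℕ) + (0 + 1) = 2 by norm_num, show (1 : ℕ) + 0 = 1 by norm_num,
        show 2 * p + 3 - (0 + 1) = 2 * p + 2 by omega, show 2 * p + 3 - 0 = 2 * p + 3 by omega,
        show 2 * (p + 1) + 1 + 1 = 2 * p + 4 by ring]
      have key : x ^ (2 * p + 4) + (a 2 * x ^ (2 * p + 2) + a 1 * x ^ (2 * p + 3))
          = x ^ (2 * p + 2) * (x ^ 2 + a 1 * x + a 2) := by ring
      rw [key]
      exact mul_nonneg (pow_nonneg hx0 _) hquad.le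
    linarith
  · -- x < 0
    have hx2' : ∀ q : ℕ, 0 < x ^ (2 * q) := fun q => by
      have h2 : 0 < x ^ 2 := by nlinarith
      rw [pow_mul]
      exact pow_pos h2 q
    rcases le_or_gt x (-1) with hx1 | hx1
    · -- case x ≤ -1 : peel last and first
      have e : 2 * p + 4 = 2 * p + 2 + 1 + 1 := by ring
      rw [e, sum_range_succ, sum_range_succ']
      have e2 : 2 * p + 2 = 2 * (p + 1) := by ring
      rw [e2, pair_sum_aux]
      have hT : 0 ≤ ∑ k ∈ range (p + 1),
          (a (1 + (2 * k + 1)) * x ^ (2 * p + 3 - (2 * k + 1)) +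
           a (1 + (2 * k + 1 + 1)) * x ^ (2 * p + 3 - (2 * k + 1 + 1))) := by
        apply Finset.sum_nonneg
        intro k hk
        simp only [mem_range] at hk
        have hk' : k ≤ p := by omega
        have e3 : 2 * p + 3 - (2 * k + 1) = 2 * (p - k) + 2 := by omega
        have e4 : 2 * p + 3 - (2 * k + 1 + 1) = 2 * (p - k) + 1 := by omega
        rw [e3, e4]
        have key : a (1 + (2 * k + 1)) * x ^ (2 * (p - k) + 2) +
            a (1 + (2 * k + 1 + 1)) * x ^ (2 * (p - k) + 1)
            = x ^ (2 * (p - k) + 1) * (a (2 * k + 2) * x + a (2 * k + 3)) := by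
          rw [show 1 + (2 * k + 1) = 2 * k + 2 by omega,
            show 1 + (2 * k + 1 + 1) = 2 * k + 3 by omega]
          ring
        rw [key]
        have hodd : x ^ (2 * (p - k) + 1) ≤ 0 :=
          Odd.pow_nonpos ⟨p - k, by omega⟩ hx0.le
        have hcoef : a (2 * k + 2) * x + a (2 * k + 3) ≤ 0 := by
          have hp1 : a (2 * (k + 1) + 1) ≤ a (2 * (k + 1)) :=
            hpair (k + 1) (by omega) (by omega)
          have h2 : 0 < a (2 * k + 2) := hpos _ (by omega) (by omega)
          have hmx : a (2 * k + 2) * x ≤ a (2 * k + 2) * (-1) :=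
            mul_le_mul_of_nonneg_left hx1 h2.le
          rw [show 2 * (k + 1) + 1 = 2 * k + 3 by omega,
            show 2 * (k + 1) = 2 * k + 2 by omega] at hp1
          linarith
        nlinarith [mul_nonneg (neg_nonneg.2 hodd) (neg_nonneg.2 hcoef)]
      have hlast : 0 < a (1 + (2 * p + 3)) * x ^ (2 * p + 3 - (2 * p + 3)) := by
        rw [show 2 * p + 3 - (2 * p + 3) = 0 by omega, pow_zero, mul_one]
        exact hpos _ (by omega) (by omega)
      have hhead : 0 < x ^ (2 * (p + 1) + 1 + 1) + a (1 + 0) * x ^ (2 * p + 3 - 0) := by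
        rw [show (1 : ℕ) + 0 = 1 by norm_num, show 2 * p + 3 - 0 = 2 * p + 3 by omega,
          show 2 * (p + 1) + 1 + 1 = 2 * p + 4 by ring]
        have key : x ^ (2 * p + 4) + a 1 * x ^ (2 * p + 3)
            = x ^ (2 * p + 3) * (x + a 1) := by ring
        rw [key]
        exact mul_pos_of_neg_of_neg (Odd.pow_neg ⟨p + 1, by omega⟩ hx0) (by linarith)
      linarith
    · -- case -1 < x < 0 : same decomposition as the nonneg case
      have e : 2 * p + 4 = 2 * p + 2 + 1 + 1 := by ring
      rw [e, sum_range_succ', sum_range_succ']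
      have e2 : 2 * p + 2 = 2 * (p + 1) := by ring
      rw [e2, pair_sum_aux]
      have hT : 0 ≤ ∑ k ∈ range (p + 1),
          (a (1 + (2 * k + 1 + 1)) * x ^ (2 * p + 3 - (2 * k + 1 + 1)) +
           a (1 + (2 * k + 1 + 1 + 1)) * x ^ (2 * p + 3 - (2 * k + 1 + 1 + 1))) := by
        apply Finset.sum_nonneg
        intro k hk
        simp only [mem_range] at hk
        have hk' : k ≤ p := by omega
        have e3 : 2 * p + 3 - (2 * k + 1 + 1) = 2 * (p - k) + 1 := by omega
        have e4 : 2 * p + 3 - (2 * k + 1 + 1 + 1) = 2 * (p - k) := by omega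
        rw [e3, e4]
        have key : a (1 + (2 * k + 1 + 1)) * x ^ (2 * (p - k) + 1) +
            a (1 + (2 * k + 1 + 1 + 1)) * x ^ (2 * (p - k))
            = x ^ (2 * (p - k)) * (a (2 * k + 3) * x + a (2 * k + 4)) := by
          rw [show 1 + (2 * k + 1 + 1) = 2 * k + 3 by omega,
            show 1 + (2 * k + 1 + 1 + 1) = 2 * k + 4 by omega]
          ring
        rw [key]
        have hcoef : 0 ≤ a (2 * k + 3) * x + a (2 * k + 4) := by
          have hmm : a (2 * (k + 1) + 1) ≤ a (2 * (k + 2)) :=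
            hminmax (k + 2) (k + 1) (by omega) (by omega) (by omega) (by omega)
          have h3 : 0 < a (2 * k + 3) := hpos _ (by omega) (by omega)
          have hmx : a (2 * k + 3) * (-1) ≤ a (2 * k + 3) * x :=
            mul_le_mul_of_nonneg_left hx1.le h3.le
          rw [show 2 * (k + 1) + 1 = 2 * k + 3 by omega,
            show 2 * (k + 2) = 2 * k + 4 by omega] at hmm
          linarith
        exact mul_nonneg (hx2 _) hcoef
      have hhead : 0 < x ^ (2 * (p + 1) + 1 + 1) + (a (1 + (0 + 1)) * x ^ (2 * p + 3 - (0 + 1)) +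
          a (1 + 0) * x ^ (2 * p + 3 - 0)) := by
        rw [show (1 : ℕ) + (0 + 1) = 2 by norm_num, show (1 : ℕ) + 0 = 1 by norm_num,
          show 2 * p + 3 - (0 + 1) = 2 * p + 2 by omega, show 2 * p + 3 - 0 = 2 * p + 3 by omega,
          show 2 * (p + 1) + 1 + 1 = 2 * p + 4 by ring]
        have h2 : 0 < a 2 := hpos 2 le_rfl (by omega)
        have hxe : 0 < x ^ (2 * p + 4) := by
          rw [show 2 * p + 4 = 2 * (p + 2) by ring]; exact hx2' _
        have hxe2 : 0 < x ^ (2 * p + 2) := by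
          rw [show 2 * p + 2 = 2 * (p + 1) by ring]; exact hx2' _
        have hodd : x ^ (2 * p + 3) < 0 := Odd.pow_neg ⟨p + 1, by omega⟩ hx0
        have h1x : 0 < a 1 * x ^ (2 * p + 3) := mul_pos_of_neg_of_neg h1 hodd
        have h2x : 0 < a 2 * x ^ (2 * p + 2) := mul_pos h2 hxe2
        linarith
      linarith
end

section
/- Let n ≥ 4 and consider polynomials f(X) = a_0 X^n + a_1 X^{n-1} + ... + a_n ∈ ℤ[X] with a_0 ≠ 0 and |a_i| ≤ H for all i. The number of such f possessing four roots α_1, α_2, α_3, α_4 (with multiplicity, at four distinct index positions) satisfying α_1 α_2 = α_3 α_4 is O(H^n), where the implied constant depends only on n. -/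
open Finset MvPolynomial

lemma sz_aux (m : ℕ) : ∀ (p : MvPolynomial (Fin m) ℤ), p ≠ 0 → ∀ S : Finset ℤ,
    S.card * ((Fintype.piFinset fun _ : Fin m => S).filter
      (fun x => MvPolynomial.eval x p = 0)).card ≤ p.totalDegree * S.card ^ m := by
  induction m with
  | zero =>
    intro p hp S
    have h0 : ∀ x : Fin 0 → ℤ, ¬ MvPolynomial.eval x p = 0 := by
      intro x
      rw [eq_C_of_isEmpty p]
      simp only [eval_C]
      intro h
      apply hp
      rw [eq_C_of_isEmpty p, h, map_zero]
    have : ((Fintype.piFinset fun _ : Fin 0 => S).filter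
        (fun x => MvPolynomial.eval x p = 0)) = ∅ :=
      Finset.filter_false_of_mem (fun x _ => h0 x)
    rw [this]
    simp
  | succ m ih =>
    intro p hp S
    classical
    set q := finSuccEquiv ℤ m p with hqdef
    have hq : q ≠ 0 := by
      intro h
      apply hp
      have := (finSuccEquiv ℤ m).injective (h.trans (map_zero (finSuccEquiv ℤ m)).symm)
      exact this
    set d := q.natDegree with hd
    set c := q.leadingCoeff with hcdef
    have hc : c ≠ 0 := Polynomial.leadingCoeff_ne_zero.mpr hq
    have hdeg : c.totalDegree + d ≤ p.totalDegree := by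
      have := totalDegree_coeff_finSuccEquiv_add_le p d (by
        rw [← hqdef, ← Polynomial.leadingCoeff]; exact hc)
      rwa [← hqdef] at this
    set B' := Fintype.piFinset fun _ : Fin m => S with hB'
    have hB'card : B'.card = S.card ^ m := by
      simp [hB', Fintype.card_piFinset]
    -- the count function
    set cnt : (Fin m → ℤ) → ℕ := fun y =>
      (S.filter fun a => MvPolynomial.eval (Fin.cons a y) p = 0).card with hcnt
    have hsub : (Fintype.piFinset fun _ : Fin (m+1) => S).filter
        (fun x => MvPolynomial.eval x p = 0) ⊆
        B'.biUnion (fun y => (S.filter fun a => MvPolynomial.eval (Fin.cons a y) p = 0).image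
          (fun a => Fin.cons a y)) := by
      intro x hx
      rw [Finset.mem_filter, Fintype.mem_piFinset] at hx
      rw [Finset.mem_biUnion]
      refine ⟨Fin.tail x, ?_, ?_⟩
      · rw [hB', Fintype.mem_piFinset]
        intro i; exact hx.1 i.succ
      · rw [Finset.mem_image]
        refine ⟨x 0, ?_, Fin.cons_self_tail x⟩
        rw [Finset.mem_filter]
        exact ⟨hx.1 0, by rw [Fin.cons_self_tail]; exact hx.2⟩
    have hcard1 : ((Fintype.piFinset fun _ : Fin (m+1) => S).filter
        (fun x => MvPolynomial.eval x p = 0)).card ≤ ∑ y ∈ B', cnt y := by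
      refine (Finset.card_le_card hsub).trans ?_
      refine (Finset.card_biUnion_le).trans ?_
      exact Finset.sum_le_sum fun y _ => Finset.card_image_le
    -- split B'
    have hsplit : ∑ y ∈ B', cnt y =
        (∑ y ∈ B'.filter (fun y => MvPolynomial.eval y c = 0), cnt y)
          + ∑ y ∈ B'.filter (fun y => ¬ MvPolynomial.eval y c = 0), cnt y :=
      (Finset.sum_filter_add_sum_filter_not _ _ _).symm
    -- good case bound
    have hgood : ∀ y, MvPolynomial.eval y c ≠ 0 → cnt y ≤ d := by
      intro y hy
      set u := q.map (MvPolynomial.eval y) with hu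
      have hu0 : u ≠ 0 := by
        intro h
        apply hy
        have : u.coeff d = 0 := by rw [h]; simp
        rwa [hu, Polynomial.coeff_map, ← Polynomial.leadingCoeff, ← hcdef] at this
      have hsub2 : (S.filter fun a => MvPolynomial.eval (Fin.cons a y) p = 0) ⊆
          u.roots.toFinset := by
        intro a ha
        rw [Finset.mem_filter] at ha
        rw [Multiset.mem_toFinset, Polynomial.mem_roots hu0]
        show Polynomial.eval a u = 0
        have := eval_eq_eval_mv_eval' y a p
        rw [ha.2] at this
        exact this.symm
      calc cnt y ≤ u.roots.toFinset.card := Finset.card_le_card hsub2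
        _ ≤ Multiset.card u.roots := Multiset.toFinset_card_le _
        _ ≤ u.natDegree := Polynomial.card_roots' u
        _ ≤ d := Polynomial.natDegree_map_le
    have hgoodsum : ∑ y ∈ B'.filter (fun y => ¬ MvPolynomial.eval y c = 0), cnt y
        ≤ d * S.card ^ m := by
      calc ∑ y ∈ B'.filter (fun y => ¬ MvPolynomial.eval y c = 0), cnt y
          ≤ ∑ _y ∈ B'.filter (fun y => ¬ MvPolynomial.eval y c = 0), d :=
            Finset.sum_le_sum fun y hy => hgood y (Finset.mem_filter.mp hy).2
        _ = (B'.filter (fun y => ¬ MvPolynomial.eval y c = 0)).card * d := by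
            rw [Finset.sum_const, smul_eq_mul]
        _ ≤ B'.card * d := Nat.mul_le_mul_right d (Finset.card_le_card (Finset.filter_subset _ _))
        _ = d * S.card ^ m := by rw [hB'card, Nat.mul_comm]
    have hbadsum : ∑ y ∈ B'.filter (fun y => MvPolynomial.eval y c = 0), cnt y
        ≤ (B'.filter (fun y => MvPolynomial.eval y c = 0)).card * S.card := by
      calc ∑ y ∈ B'.filter (fun y => MvPolynomial.eval y c = 0), cnt y
          ≤ ∑ _y ∈ B'.filter (fun y => MvPolynomial.eval y c = 0), S.card :=
            Finset.sum_le_sum fun y _ => Finset.card_filter_le _ _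
        _ = _ := by rw [Finset.sum_const, smul_eq_mul]
    have hih := ih c hc S
    -- assemble
    calc S.card * ((Fintype.piFinset fun _ : Fin (m+1) => S).filter
          (fun x => MvPolynomial.eval x p = 0)).card
        ≤ S.card * (∑ y ∈ B', cnt y) := Nat.mul_le_mul_left _ hcard1
      _ = S.card * ((∑ y ∈ B'.filter (fun y => MvPolynomial.eval y c = 0), cnt y)
            + ∑ y ∈ B'.filter (fun y => ¬ MvPolynomial.eval y c = 0), cnt y) := by rw [← hsplit]
      _ ≤ S.card * ((B'.filter (fun y => MvPolynomial.eval y c = 0)).card * S.card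
            + d * S.card ^ m) :=
          Nat.mul_le_mul_left _ (Nat.add_le_add hbadsum hgoodsum)
      _ = (S.card * (B'.filter (fun y => MvPolynomial.eval y c = 0)).card) * S.card
            + d * S.card ^ (m+1) := by ring
      _ ≤ (c.totalDegree * S.card ^ m) * S.card + d * S.card ^ (m+1) := by
          exact Nat.add_le_add_right (Nat.mul_le_mul_right _ hih) _
      _ = (c.totalDegree + d) * S.card ^ (m+1) := by ring
      _ ≤ p.totalDegree * S.card ^ (m+1) := Nat.mul_le_mul_right _ hdeg


open Finset MvPolynomial

/-- index set: ordered pairs of distinct 2-element subsets of `Fin n` -/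
def pairsT (n : ℕ) : Finset (Finset (Fin n) × Finset (Fin n)) :=
  ((Finset.univ : Finset (Fin n)).powersetCard 2).offDiag

noncomputable def Spoly (n : ℕ) : MvPolynomial (Fin n) ℤ :=
  ∏ P ∈ pairsT n, ((∏ i ∈ P.1, X i) - ∏ i ∈ P.2, X i)

lemma mem_pairsT_map {n : ℕ} (τ : Equiv.Perm (Fin n))
    {P : Finset (Fin n) × Finset (Fin n)} (hP : P ∈ pairsT n) :
    (P.1.map τ.toEmbedding, P.2.map τ.toEmbedding) ∈ pairsT n := by
  rw [pairsT, Finset.mem_offDiag] at hP ⊢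
  obtain ⟨h1, h2, h3⟩ := hP
  rw [Finset.mem_powersetCard] at h1 h2
  refine ⟨?_, ?_, ?_⟩
  · rw [Finset.mem_powersetCard]
    exact ⟨Finset.subset_univ _, by rw [Finset.card_map]; exact h1.2⟩
  · rw [Finset.mem_powersetCard]
    exact ⟨Finset.subset_univ _, by rw [Finset.card_map]; exact h2.2⟩
  · simp only [ne_eq]
    intro h
    exact h3 (Finset.map_injective τ.toEmbedding h)

lemma Spoly_isSymmetric (n : ℕ) : (Spoly n).IsSymmetric := by
  intro σ
  unfold Spoly
  rw [map_prod]
  have hren : ∀ s : Finset (Fin n),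
      rename σ (∏ i ∈ s, (X i : MvPolynomial (Fin n) ℤ))
        = ∏ i ∈ s.map σ.toEmbedding, X i := by
    intro s
    rw [map_prod, Finset.prod_map]
    simp
  refine Finset.prod_nbij' (fun P => (P.1.map σ.toEmbedding, P.2.map σ.toEmbedding))
    (fun P => (P.1.map σ.symm.toEmbedding, P.2.map σ.symm.toEmbedding))
    (fun P hP => mem_pairsT_map σ hP) (fun P hP => mem_pairsT_map σ.symm hP)
    ?_ ?_ ?_
  · intro P _
    refine Prod.ext ?_ ?_ <;> (ext x; simp)
  · intro P _
    refine Prod.ext ?_ ?_ <;> (ext x; simp)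
  · intro P _
    rw [map_sub, hren, hren]

noncomputable def Qpoly (n : ℕ) : MvPolynomial (Fin n) ℤ :=
  (MvPolynomial.esymmAlgHom_surjective (σ := Fin n) (R := ℤ) (n := n)
    (by simp) ⟨Spoly n, Spoly_isSymmetric n⟩).choose

lemma Qpoly_spec (n : ℕ) :
    aeval (fun i : Fin n => esymm (Fin n) ℤ ((i : ℕ) + 1)) (Qpoly n) = Spoly n := by
  have h := (MvPolynomial.esymmAlgHom_surjective (σ := Fin n) (R := ℤ) (n := n)
    (by simp) ⟨Spoly n, Spoly_isSymmetric n⟩).choose_spec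
  have h2 := congrArg Subtype.val h
  rw [esymmAlgHom_apply] at h2
  exact h2

def vvec (n : ℕ) (f : Polynomial ℤ) : Fin n → ℤ := fun k =>
  (-1) ^ ((k : ℕ) + 1) * (f.coeff n) ^ (k : ℕ) * f.coeff (n - ((k : ℕ) + 1))

noncomputable def Nval (n : ℕ) (f : Polynomial ℤ) : ℤ :=
  MvPolynomial.eval (vvec n f) (Qpoly n)

lemma aeval_int {n : ℕ} (v : Fin n → ℤ) (Q : MvPolynomial (Fin n) ℤ) :
    MvPolynomial.aeval v Q = MvPolynomial.eval v Q := by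
  rw [MvPolynomial.aeval_def, algebraMap_int_eq, Int.castRingHom_int, MvPolynomial.eval₂_id]

lemma cast_eval {n : ℕ} (v : Fin n → ℤ) (Q : MvPolynomial (Fin n) ℤ) :
    ((MvPolynomial.eval v Q : ℤ) : ℂ) = MvPolynomial.aeval (fun i => ((v i : ℤ) : ℂ)) Q := by
  rw [MvPolynomial.aeval_def, algebraMap_int_eq]
  have h := MvPolynomial.eval₂_comp_left (Int.castRingHom ℂ) (RingHom.id ℤ) v Q
  rw [RingHom.comp_id, MvPolynomial.eval₂_id] at h
  exact h

lemma key {n : ℕ} (hn : 0 < n) (f : Polynomial ℤ) (hf : f.natDegree = n) (e : Fin n → ℂ)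
    (he : Multiset.map e Finset.univ.val = (f.map (Int.castRingHom ℂ)).roots) :
    ((Nval n f : ℤ) : ℂ)
      = MvPolynomial.aeval (fun i => ((f.coeff n : ℤ) : ℂ) * e i) (Spoly n) := by
  set F := f.map (Int.castRingHom ℂ) with hF
  set c : ℂ := ((f.coeff n : ℤ) : ℂ) with hc
  have hf0 : f ≠ 0 := by
    intro h
    rw [h, Polynomial.natDegree_zero] at hf
    omega
  have ha0 : f.coeff n ≠ 0 := by
    rw [← hf]
    exact Polynomial.leadingCoeff_ne_zero.mpr hf0
  have hc0 : c ≠ 0 := by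
    rw [hc]
    exact_mod_cast ha0
  have hlc : (Int.castRingHom ℂ) f.leadingCoeff ≠ 0 := by
    rw [Polynomial.leadingCoeff, hf]
    simp only [Int.coe_castRingHom]
    exact_mod_cast ha0
  have hFdeg : F.natDegree = n := by
    rw [hF, Polynomial.natDegree_map_of_leadingCoeff_ne_zero _ hlc, hf]
  have hFlc : F.leadingCoeff = c := by
    rw [Polynomial.leadingCoeff, hFdeg, hF, Polynomial.coeff_map, hc]
    rfl
  have hcard : Multiset.card F.roots = F.natDegree :=
    (Polynomial.splits_iff_card_roots).mp (IsAlgClosed.splits F)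
  -- Vieta
  have hesymm : ∀ k : Fin n,
      ((vvec n f k : ℤ) : ℂ)
        = (Multiset.map (fun z => c * z) F.roots).esymm ((k : ℕ) + 1) := by
    intro k
    set K := (k : ℕ) + 1 with hK
    have hKn : K ≤ n := by
      have := k.isLt
      omega
    have hV := Polynomial.coeff_eq_esymm_roots_of_card hcard
      (k := n - K) (by rw [hFdeg]; omega)
    rw [hFdeg, hFlc] at hV
    have hnn : n - (n - K) = K := by omega
    rw [hnn] at hV
    -- scaling
    have hscale : (Multiset.map (fun z => c * z) F.roots).esymm K
        = c ^ K * F.roots.esymm K := by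
      have := Multiset.pow_smul_esymm c K F.roots
      simp only [smul_eq_mul] at this
      rw [← this]
    rw [hscale]
    have hcoeff : ((f.coeff (n - K) : ℤ) : ℂ) = F.coeff (n - K) := by
      rw [hF, Polynomial.coeff_map]
      rfl
    have h1 : ((-1 : ℂ)) ^ K * (-1 : ℂ) ^ K = 1 := by
      rw [← mul_pow]
      norm_num
    calc ((vvec n f k : ℤ) : ℂ)
        = (-1) ^ K * c ^ (k : ℕ) * F.coeff (n - K) := by
          rw [vvec, ← hcoeff]
          push_cast
          ring
      _ = (-1) ^ K * c ^ (k : ℕ) * (c * (-1) ^ K * F.roots.esymm K) := by rw [← hV]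
      _ = ((-1 : ℂ) ^ K * (-1 : ℂ) ^ K) * (c ^ (k : ℕ) * c * F.roots.esymm K) := by ring
      _ = c ^ K * F.roots.esymm K := by rw [h1, one_mul, hK, pow_succ]
  -- main chain
  have hcomp := MvPolynomial.comp_aeval
    (f := fun i : Fin n => esymm (Fin n) ℤ ((i : ℕ) + 1))
    (φ := MvPolynomial.aeval (R := ℤ) (fun i : Fin n => c * e i))
  have hcomp2 := congrArg (fun (ψ : MvPolynomial (Fin n) ℤ →ₐ[ℤ] ℂ) => ψ (Qpoly n)) hcomp
  simp only [AlgHom.comp_apply] at hcomp2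
  rw [Qpoly_spec] at hcomp2
  have hmulti : ∀ i : Fin n,
      MvPolynomial.aeval (fun i : Fin n => c * e i) (esymm (Fin n) ℤ ((i : ℕ) + 1))
        = (Multiset.map (fun z => c * z) F.roots).esymm ((i : ℕ) + 1) := by
    intro i
    rw [MvPolynomial.aeval_esymm_eq_multiset_esymm]
    congr 1
    rw [← he, Multiset.map_map]
    rfl
  have hv : (fun i : Fin n => ((vvec n f i : ℤ) : ℂ))
      = fun i : Fin n => (aeval fun i : Fin n => c * e i) (esymm (Fin n) ℤ ((i : ℕ) + 1)) := by
    funext i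
    rw [hmulti i]
    exact hesymm i
  rw [Nval, cast_eval, hcomp2, hv]

lemma two_pow_sum_inj {i j k l : ℕ} (hij : i < j) (hkl : k < l)
    (h : 2 ^ i + 2 ^ j = 2 ^ k + 2 ^ l) : i = k ∧ j = l := by
  rcases lt_trichotomy j l with hjl | rfl | hlj
  · exfalso
    have h1 : 2 ^ i + 2 ^ j < 2 ^ k + 2 ^ l := by
      calc 2 ^ i + 2 ^ j < 2 ^ j + 2 ^ j :=
            Nat.add_lt_add_right (Nat.pow_lt_pow_right one_lt_two hij) _
        _ = 2 ^ (j + 1) := by ring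
        _ ≤ 2 ^ l := Nat.pow_le_pow_right (by norm_num) hjl
        _ ≤ 2 ^ k + 2 ^ l := Nat.le_add_left _ _
    exact absurd h (Nat.ne_of_lt h1)
  · have h2 : (2:ℕ) ^ i = 2 ^ k := Nat.add_right_cancel h
    exact ⟨Nat.pow_right_injective le_rfl h2, rfl⟩
  · exfalso
    have h1 : 2 ^ k + 2 ^ l < 2 ^ i + 2 ^ j := by
      calc 2 ^ k + 2 ^ l < 2 ^ l + 2 ^ l :=
            Nat.add_lt_add_right (Nat.pow_lt_pow_right one_lt_two hkl) _
        _ = 2 ^ (l + 1) := by ring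
        _ ≤ 2 ^ j := Nat.pow_le_pow_right (by norm_num) hlj
        _ ≤ 2 ^ i + 2 ^ j := Nat.le_add_left _ _
    exact absurd h.symm (Nat.ne_of_lt h1)

lemma pair_sum_ne {n : ℕ} (i j k l : Fin n) (hij : i ≠ j) (hkl : k ≠ l)
    (hne : ({i, j} : Finset (Fin n)) ≠ {k, l}) :
    2 ^ (i : ℕ) + 2 ^ (j : ℕ) ≠ 2 ^ (k : ℕ) + 2 ^ (l : ℕ) := by
  intro h
  apply hne
  have main : ∀ a b x y : Fin n, (a : ℕ) < b → (x : ℕ) < y →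
      2 ^ (a : ℕ) + 2 ^ (b : ℕ) = 2 ^ (x : ℕ) + 2 ^ (y : ℕ) →
      ({a, b} : Finset (Fin n)) = {x, y} := by
    intro a b x y hab hxy hsum
    obtain ⟨h1, h2⟩ := two_pow_sum_inj hab hxy hsum
    rw [Fin.ext h1, Fin.ext h2]
  have hij' : (i : ℕ) ≠ (j : ℕ) := fun hh => hij (Fin.ext hh)
  have hkl' : (k : ℕ) ≠ (l : ℕ) := fun hh => hkl (Fin.ext hh)
  rcases Nat.lt_or_ge (i : ℕ) (j : ℕ) with h1 | h1 <;>
    rcases Nat.lt_or_ge (k : ℕ) (l : ℕ) with h2 | h2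
  · exact main i j k l h1 h2 h
  · have h2' : (l : ℕ) < (k : ℕ) := by omega
    rw [Finset.pair_comm k l]
    exact main i j l k h1 h2' (by rw [h, Nat.add_comm])
  · have h1' : (j : ℕ) < (i : ℕ) := by omega
    rw [Finset.pair_comm i j]
    exact main j i k l h1' h2 (by rw [Nat.add_comm (2 ^ (j:ℕ)) (2 ^ (i:ℕ))]; exact h)
  · have h1' : (j : ℕ) < (i : ℕ) := by omega
    have h2' : (l : ℕ) < (k : ℕ) := by omega
    rw [Finset.pair_comm i j, Finset.pair_comm k l]
    exact main j i l k h1' h2'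
      (by rw [Nat.add_comm (2 ^ (j:ℕ)) (2 ^ (i:ℕ)), h, Nat.add_comm])

/-- the witness polynomial with roots `2 ^ 2 ^ i` -/
noncomputable def wpoly (n : ℕ) : Polynomial ℤ :=
  ∏ i : Fin n, (Polynomial.X - Polynomial.C ((2 ^ 2 ^ (i : ℕ) : ℕ) : ℤ))

lemma wpoly_monic (n : ℕ) : (wpoly n).Monic :=
  Polynomial.monic_prod_of_monic _ _ (fun i _ => Polynomial.monic_X_sub_C _)

lemma wpoly_natDegree (n : ℕ) : (wpoly n).natDegree = n := by
  rw [wpoly, Polynomial.natDegree_prod_of_monic _ _ (fun i _ => Polynomial.monic_X_sub_C _)]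
  have h2 : ∑ i : Fin n, (Polynomial.X - Polynomial.C ((2 ^ 2 ^ (i:ℕ) : ℕ) : ℤ)).natDegree
      = ∑ _i : Fin n, 1 :=
    Finset.sum_congr rfl (fun i _ => Polynomial.natDegree_X_sub_C _)
  rw [h2]
  simp

lemma wpoly_roots (n : ℕ) :
    Multiset.map (fun i : Fin n => ((2 ^ 2 ^ (i : ℕ) : ℕ) : ℂ)) Finset.univ.val
      = ((wpoly n).map (Int.castRingHom ℂ)).roots := by
  have hmap : (wpoly n).map (Int.castRingHom ℂ)
      = ∏ i : Fin n, (Polynomial.X - Polynomial.C ((2 ^ 2 ^ (i : ℕ) : ℕ) : ℂ)) := by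
    rw [wpoly, Polynomial.map_prod]
    congr 1
    funext i
    have hcc : (Int.castRingHom ℂ) ((2 ^ 2 ^ (i:ℕ) : ℕ) : ℤ) = ((2 ^ 2 ^ (i:ℕ) : ℕ) : ℂ) := by
      simp only [Int.coe_castRingHom]
      push_cast
      ring
    rw [Polynomial.map_sub, Polynomial.map_X, Polynomial.map_C, hcc]
  have hmm : Multiset.map (fun i : Fin n =>
        Polynomial.X - Polynomial.C ((2 ^ 2 ^ (i:ℕ) : ℕ) : ℂ)) Finset.univ.val
      = Multiset.map (fun a : ℂ => Polynomial.X - Polynomial.C a)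
          (Multiset.map (fun i : Fin n => ((2 ^ 2 ^ (i:ℕ) : ℕ) : ℂ)) Finset.univ.val) := by
    rw [Multiset.map_map]
    rfl
  rw [hmap, Finset.prod_eq_multiset_prod, hmm, Polynomial.roots_multiset_prod_X_sub_C]

lemma wpoly_nval {n : ℕ} (hn : 0 < n) : Nval n (wpoly n) ≠ 0 := by
  intro h0
  have hcoeffn : (wpoly n).coeff n = 1 := by
    have := (wpoly_monic n).coeff_natDegree
    rwa [wpoly_natDegree n] at this
  have hkey := key hn (wpoly n) (wpoly_natDegree n) _ (wpoly_roots n)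
  rw [h0] at hkey
  -- now show RHS nonzero
  have hne : MvPolynomial.aeval
      (fun i : Fin n => (((wpoly n).coeff n : ℤ) : ℂ) * ((2 ^ 2 ^ (i : ℕ) : ℕ) : ℂ))
      (Spoly n) ≠ 0 := by
    rw [Spoly, map_prod]
    rw [Finset.prod_ne_zero_iff]
    intro P hP
    rw [pairsT, Finset.mem_offDiag] at hP
    obtain ⟨h1, h2, h3⟩ := hP
    rw [Finset.mem_powersetCard] at h1 h2
    obtain ⟨i, j, hij, hP1⟩ := Finset.card_eq_two.mp h1.2
    obtain ⟨k, l, hkl, hP2⟩ := Finset.card_eq_two.mp h2.2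
    rw [map_sub, map_prod, map_prod, hP1, hP2,
      Finset.prod_pair hij, Finset.prod_pair hkl]
    simp only [MvPolynomial.aeval_X, hcoeffn]
    push_cast
    simp only [Int.cast_one, one_mul]
    rw [sub_ne_zero]
    intro heq
    have heq2 : ((2 ^ (2 ^ (i:ℕ) + 2 ^ (j:ℕ)) : ℕ) : ℂ) = ((2 ^ (2 ^ (k:ℕ) + 2 ^ (l:ℕ)) : ℕ) : ℂ) := by
      push_cast [pow_add]
      convert heq using 2 <;> norm_num
    have heq3 : (2:ℕ) ^ (2 ^ (i:ℕ) + 2 ^ (j:ℕ)) = 2 ^ (2 ^ (k:ℕ) + 2 ^ (l:ℕ)) :=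
      Nat.cast_injective heq2
    have heq4 := Nat.pow_right_injective le_rfl heq3
    exact pair_sum_ne i j k l hij hkl (hP1 ▸ hP2 ▸ h3) heq4
  apply hne
  rw [← hkey]
  simp

lemma bad_zero {n : ℕ} (hn : 4 ≤ n) (f : Polynomial ℤ) (hf : f.natDegree = n)
    (a1 a2 a3 a4 : ℂ)
    (hle : ({a1, a2, a3, a4} : Multiset ℂ) ≤ (f.map (Int.castRingHom ℂ)).roots)
    (hrel : a1 * a2 = a3 * a4) : Nval n f = 0 := by
  set F := f.map (Int.castRingHom ℂ) with hF
  have hf0 : f ≠ 0 := by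
    intro h
    rw [h, Polynomial.natDegree_zero] at hf
    omega
  have hlc : (Int.castRingHom ℂ) f.leadingCoeff ≠ 0 := by
    simp only [Int.coe_castRingHom]
    exact_mod_cast Polynomial.leadingCoeff_ne_zero.mpr hf0
  have hFdeg : F.natDegree = n := by
    rw [hF, Polynomial.natDegree_map_of_leadingCoeff_ne_zero _ hlc, hf]
  have hcard : Multiset.card F.roots = n := by
    rw [← hFdeg]
    exact (Polynomial.splits_iff_card_roots).mp (IsAlgClosed.splits F)
  obtain ⟨rest, hrest⟩ := Multiset.le_iff_exists_add.mp hle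
  set L : List ℂ := a1 :: a2 :: a3 :: a4 :: rest.toList with hLdef
  have hL : (L : Multiset ℂ) = F.roots := by
    have h1 : (L : Multiset ℂ) = a1 ::ₘ a2 ::ₘ a3 ::ₘ a4 ::ₘ rest := by
      show (L : Multiset ℂ) = a1 ::ₘ a2 ::ₘ a3 ::ₘ a4 ::ₘ rest
      rw [hLdef]
      calc (↑(a1 :: a2 :: a3 :: a4 :: rest.toList) : Multiset ℂ)
          = a1 ::ₘ a2 ::ₘ a3 ::ₘ a4 ::ₘ (↑rest.toList : Multiset ℂ) := by
            rw [Multiset.cons_coe, Multiset.cons_coe, Multiset.cons_coe, Multiset.cons_coe]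
        _ = a1 ::ₘ a2 ::ₘ a3 ::ₘ a4 ::ₘ rest := by rw [Multiset.coe_toList]
    rw [h1, hrest]
    simp [Multiset.insert_eq_cons, Multiset.cons_add]
  have hlen : L.length = n := by
    have hc := congrArg Multiset.card hL
    rw [Multiset.coe_card, hcard] at hc
    exact hc
  set e : Fin n → ℂ := fun i => L.getD (i : ℕ) 0 with he_def
  have he : Multiset.map e Finset.univ.val = F.roots := by
    rw [← hL]
    have h2 : Finset.univ.val.map e = ↑(List.ofFn e) := Fin.univ_val_map e
    rw [h2]
    congr 1
    apply List.ext_getElem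
    · rw [List.length_ofFn, hlen]
    · intro idx h1 h2
      rw [List.getElem_ofFn]
      exact List.getD_eq_getElem L 0 h2
  have hkey := key (by omega) f hf e he
  have hzero : MvPolynomial.aeval (fun i => ((f.coeff n : ℤ) : ℂ) * e i) (Spoly n) = 0 := by
    rw [Spoly, map_prod]
    apply Finset.prod_eq_zero
      (i := (({⟨0, by omega⟩, ⟨1, by omega⟩} : Finset (Fin n)),
             ({⟨2, by omega⟩, ⟨3, by omega⟩} : Finset (Fin n))))
    · rw [pairsT, Finset.mem_offDiag]
      refine ⟨?_, ?_, ?_⟩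
      · rw [Finset.mem_powersetCard]
        refine ⟨Finset.subset_univ _, ?_⟩
        rw [Finset.card_insert_of_notMem (by simp), Finset.card_singleton]
      · rw [Finset.mem_powersetCard]
        refine ⟨Finset.subset_univ _, ?_⟩
        rw [Finset.card_insert_of_notMem (by simp), Finset.card_singleton]
      · intro hcontra
        dsimp only at hcontra
        have hmem : (⟨0, by omega⟩ : Fin n)
            ∈ ({⟨2, by omega⟩, ⟨3, by omega⟩} : Finset (Fin n)) := by
          rw [← hcontra]
          exact Finset.mem_insert_self _ _
        simp [Fin.mk.injEq] at hmem
    · rw [map_sub, map_prod, map_prod,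
        Finset.prod_pair (by simp), Finset.prod_pair (by simp)]
      simp only [MvPolynomial.aeval_X]
      have e0 : e ⟨0, by omega⟩ = a1 := rfl
      have e1 : e ⟨1, by omega⟩ = a2 := rfl
      have e2 : e ⟨2, by omega⟩ = a3 := rfl
      have e3 : e ⟨3, by omega⟩ = a4 := rfl
      rw [e0, e1, e2, e3]
      linear_combination (((f.coeff n : ℤ) : ℂ)) ^ 2 * hrel
  have hcast : ((Nval n f : ℤ) : ℂ) = 0 := by rw [hkey, hzero]
  exact_mod_cast hcast

noncomputable def Rpoly (n : ℕ) : MvPolynomial (Fin (n + 1)) ℤ :=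
  MvPolynomial.aeval (fun k : Fin n =>
    MvPolynomial.C ((-1 : ℤ) ^ ((k : ℕ) + 1)) * MvPolynomial.X (Fin.last n) ^ (k : ℕ)
      * MvPolynomial.X (⟨n - ((k : ℕ) + 1), by omega⟩ : Fin (n + 1))) (Qpoly n)

lemma eval_Rpoly (n : ℕ) (f : Polynomial ℤ) :
    MvPolynomial.eval (fun i : Fin (n + 1) => f.coeff (i : ℕ)) (Rpoly n) = Nval n f := by
  set x : Fin (n + 1) → ℤ := fun i => f.coeff (i : ℕ) with hx
  have hcomp := MvPolynomial.comp_aeval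
    (f := fun k : Fin n => MvPolynomial.C ((-1 : ℤ) ^ ((k : ℕ) + 1))
      * MvPolynomial.X (Fin.last n) ^ (k : ℕ)
      * MvPolynomial.X (⟨n - ((k : ℕ) + 1), by omega⟩ : Fin (n + 1)))
    (φ := (MvPolynomial.eval x).toIntAlgHom)
  have hcomp2 := congrArg (fun ψ : MvPolynomial (Fin n) ℤ →ₐ[ℤ] ℤ => ψ (Qpoly n)) hcomp
  simp only [AlgHom.comp_apply] at hcomp2
  have h1 : MvPolynomial.eval x (Rpoly n)
      = MvPolynomial.aeval (fun k : Fin n => MvPolynomial.eval x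
          (MvPolynomial.C ((-1 : ℤ) ^ ((k : ℕ) + 1)) * MvPolynomial.X (Fin.last n) ^ (k : ℕ)
            * MvPolynomial.X (⟨n - ((k : ℕ) + 1), by omega⟩ : Fin (n + 1)))) (Qpoly n) :=
    hcomp2
  have hfun : (fun k : Fin n => MvPolynomial.eval x
      (MvPolynomial.C ((-1 : ℤ) ^ ((k : ℕ) + 1)) * MvPolynomial.X (Fin.last n) ^ (k : ℕ)
        * MvPolynomial.X (⟨n - ((k : ℕ) + 1), by omega⟩ : Fin (n + 1)))) = vvec n f := by
    funext k
    simp only [map_mul, map_pow, MvPolynomial.eval_C, MvPolynomial.eval_X]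
    simp [vvec, hx, Fin.val_last]
  rw [h1, aeval_int, hfun]
  rfl

lemma Rpoly_ne {n : ℕ} (hn : 0 < n) : Rpoly n ≠ 0 := by
  intro h
  apply wpoly_nval hn
  rw [← eval_Rpoly n (wpoly n), h, map_zero]

/-- For n ≥ 4, the number of integer polynomials f of degree n and height at most H
possessing four roots (with multiplicity) α₁, α₂, α₃, α₄ with α₁α₂ = α₃α₄ is O(Hⁿ). -/
theorem count_multiplicative_relation (n : ℕ) (hn : 4 ≤ n) :
    ∃ c : ℝ, 0 < c ∧ ∀ H : ℕ, 1 ≤ H →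
      (({ f : Polynomial ℤ | f.natDegree = n ∧ (∀ i, |f.coeff i| ≤ (H : ℤ)) ∧
        ∃ a1 a2 a3 a4 : ℂ,
          ({a1, a2, a3, a4} : Multiset ℂ) ≤ (f.map (Int.castRingHom ℂ)).roots ∧
          a1 * a2 = a3 * a4 } : Set (Polynomial ℤ)).ncard : ℝ) ≤ c * (H : ℝ) ^ n := by
  classical
  refine ⟨((((Rpoly n).totalDegree + 1) * 3 ^ n : ℕ) : ℝ), ?_, ?_⟩
  · have h1 : 0 < ((Rpoly n).totalDegree + 1) * 3 ^ n := by positivity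
    exact_mod_cast h1
  intro H hH
  set B := { f : Polynomial ℤ | f.natDegree = n ∧ (∀ i, |f.coeff i| ≤ (H : ℤ)) ∧
        ∃ a1 a2 a3 a4 : ℂ,
          ({a1, a2, a3, a4} : Multiset ℂ) ≤ (f.map (Int.castRingHom ℂ)).roots ∧
          a1 * a2 = a3 * a4 } with hB
  set φ : Polynomial ℤ → (Fin (n + 1) → ℤ) := fun f i => f.coeff (i : ℕ) with hφ
  set FS := (Fintype.piFinset fun _ : Fin (n + 1) => Finset.Icc (-(H : ℤ)) (H : ℤ)).filter
      (fun a => MvPolynomial.eval a (Rpoly n) = 0) with hFS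
  have hinj : Set.InjOn φ B := by
    intro f hf g hg hfg
    rw [hB, Set.mem_setOf_eq] at hf hg
    ext i
    rcases Nat.lt_or_ge i (n + 1) with hi | hi
    · exact congrFun hfg ⟨i, hi⟩
    · rw [Polynomial.coeff_eq_zero_of_natDegree_lt, Polynomial.coeff_eq_zero_of_natDegree_lt]
      · rw [hg.1]; omega
      · rw [hf.1]; omega
  have himg : φ '' B ⊆ ↑FS := by
    rintro _ ⟨f, hf, rfl⟩
    rw [hB, Set.mem_setOf_eq] at hf
    obtain ⟨hdeg, hht, a1, a2, a3, a4, hle, hrel⟩ := hf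
    rw [hFS, Finset.coe_filter, Set.mem_setOf_eq]
    constructor
    · rw [Fintype.mem_piFinset]
      intro i
      rw [Finset.mem_Icc]
      exact abs_le.mp (hht (i : ℕ))
    · rw [hφ]
      rw [eval_Rpoly]
      exact bad_zero hn f hdeg a1 a2 a3 a4 hle hrel
  have h1 : B.ncard ≤ FS.card := by
    calc B.ncard = (φ '' B).ncard := (Set.ncard_image_of_injOn hinj).symm
      _ ≤ (↑FS : Set (Fin (n + 1) → ℤ)).ncard := Set.ncard_le_ncard himg FS.finite_toSet
      _ = FS.card := Set.ncard_coe_finset FS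
  have hsz := sz_aux (n + 1) (Rpoly n) (Rpoly_ne (by omega)) (Finset.Icc (-(H : ℤ)) (H : ℤ))
  have hIcc : (Finset.Icc (-(H : ℤ)) (H : ℤ)).card = 2 * H + 1 := by
    rw [Int.card_Icc]
    omega
  rw [hIcc, ← hFS] at hsz
  have h2 : FS.card ≤ (Rpoly n).totalDegree * (2 * H + 1) ^ n := by
    have hpos : 0 < 2 * H + 1 := by omega
    rw [pow_succ] at hsz
    apply Nat.le_of_mul_le_mul_left _ hpos
    calc (2 * H + 1) * FS.card ≤ (Rpoly n).totalDegree * ((2 * H + 1) ^ n * (2 * H + 1)) := hsz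
      _ = (2 * H + 1) * ((Rpoly n).totalDegree * (2 * H + 1) ^ n) := by ring
  have h3 : 2 * H + 1 ≤ 3 * H := by omega
  have h4 : FS.card ≤ ((Rpoly n).totalDegree + 1) * 3 ^ n * H ^ n := by
    calc FS.card ≤ (Rpoly n).totalDegree * (2 * H + 1) ^ n := h2
      _ ≤ (Rpoly n).totalDegree * (3 * H) ^ n :=
          Nat.mul_le_mul_left _ (Nat.pow_le_pow_left h3 n)
      _ = (Rpoly n).totalDegree * (3 ^ n * H ^ n) := by rw [mul_pow]
      _ = (Rpoly n).totalDegree * 3 ^ n * H ^ n := by rw [mul_assoc]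
      _ ≤ ((Rpoly n).totalDegree + 1) * 3 ^ n * H ^ n :=
          Nat.mul_le_mul_right _ (Nat.mul_le_mul_right _ (Nat.le_succ _))
  have h5 : B.ncard ≤ ((Rpoly n).totalDegree + 1) * 3 ^ n * H ^ n := le_trans h1 h4
  calc (B.ncard : ℝ) ≤ (((((Rpoly n).totalDegree + 1) * 3 ^ n * H ^ n : ℕ)) : ℝ) := by
        exact_mod_cast h5
    _ = ((((Rpoly n).totalDegree + 1) * 3 ^ n : ℕ) : ℝ) * (H : ℝ) ^ n := by
        push_cast
        ring
end
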